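/- arXiv:2206.03479 — 3 statements merged into one kernel-verified Lean document; each statement's English description precedes it below -/
import Mathlib

section
/- For every squarefree ℓ ≤ Δ one has |ρ_ℓ| ≤ 1. -/
/-!
Writing `d = ℓ m`, multiplicativity gives `ρ_ℓ = μ(ℓ) H⁻¹ Σ_m g(m) log(Δ/(ℓ m))`, the sum running
over squarefree `m` with `ℓ m ≤ Δ`. Each term is nonnegative and at most `h(m) log(Δ/m)`, because
`g(p) ≤ g(p)/(1 - g(p))` and `ℓ m ≥ m`; these are distinct terms of the sum defining `H`,
so `0 ≤ H |ρ_ℓ| ≤ H`.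
-/

open Finset

/-- The multiplicative function supported on squarefree integers with
`h(p) = g(p) / (1 - g(p))` at primes. -/
noncomputable def hfun (g : ℕ → ℝ) (d : ℕ) : ℝ :=
  if Squarefree d then ∏ p ∈ d.primeFactors, g p / (1 - g p) else 0

theorem Finset.sum_le_sum_of_injOn {ι κ M : Type*} [AddCommMonoid M] [PartialOrder M]
    [IsOrderedAddMonoid M] [DecidableEq κ] {s : Finset ι} {t : Finset κ} {f : ι → M}
    {F : κ → M} (e : ι → κ) (he : Set.InjOn e s) (hest : Set.MapsTo e s t)
    (hf : ∀ i ∈ s, f i ≤ F (e i)) (hF : ∀ k ∈ t, 0 ≤ F k) :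
    ∑ i ∈ s, f i ≤ ∑ k ∈ t, F k :=
  calc ∑ i ∈ s, f i ≤ ∑ i ∈ s, F (e i) := sum_le_sum hf
    _ = ∑ k ∈ s.image e, F k := (sum_image he).symm
    _ ≤ ∑ k ∈ t, F k :=
      sum_le_sum_of_subset_of_nonneg (image_subset_iff.mpr hest) fun k hk _ => hF k hk

section Multiplicative

variable {β : Type*} {g : ℕ → β}

theorem eq_prod_primeFactors_of_squarefree [CommMonoid β] (hg1 : g 1 = 1)
    (hgmult : ∀ m n : ℕ, m.Coprime n → g (m * n) = g m * g n) {n : ℕ} (hn : Squarefree n) :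
    g n = ∏ p ∈ n.primeFactors, g p := by
  rw [Nat.multiplicative_factorization g hgmult hg1 hn.ne_zero, Finsupp.prod,
    Nat.support_factorization]
  refine prod_congr rfl fun p hp => ?_
  rw [Nat.factorization_eq_one_of_squarefree hn (Nat.prime_of_mem_primeFactors hp)
    (Nat.dvd_of_mem_primeFactors hp), pow_one]

theorem eq_mul_div_of_squarefree [Mul β]
    (hgmult : ∀ m n : ℕ, m.Coprime n → g (m * n) = g m * g n) {ℓ d : ℕ} (hd : Squarefree d)
    (hℓd : ℓ ∣ d) : g d = g ℓ * g (d / ℓ) := by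
  obtain ⟨m, rfl⟩ := hℓd
  rcases ℓ.eq_zero_or_pos with rfl | hℓ
  · simp at hd
  rw [Nat.mul_div_cancel_left m hℓ]
  exact hgmult ℓ m (Nat.coprime_of_squarefree_mul hd)

end Multiplicative

section Real

variable {g : ℕ → ℝ} (hg1 : g 1 = 1)
  (hgmult : ∀ m n : ℕ, m.Coprime n → g (m * n) = g m * g n)
include hg1 hgmult

theorem nonneg_of_squarefree {n : ℕ} (hn : Squarefree n) (hg : ∀ p ∈ n.primeFactors, 0 ≤ g p) :
    0 ≤ g n := by
  rw [eq_prod_primeFactors_of_squarefree hg1 hgmult hn]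
  exact prod_nonneg hg

theorem pos_of_squarefree {n : ℕ} (hn : Squarefree n) (hg : ∀ p ∈ n.primeFactors, 0 < g p) :
    0 < g n := by
  rw [eq_prod_primeFactors_of_squarefree hg1 hgmult hn]
  exact prod_pos hg

theorem le_hfun_of_squarefree {n : ℕ} (hn : Squarefree n)
    (hg : ∀ p ∈ n.primeFactors, 0 ≤ g p ∧ g p < 1) : g n ≤ hfun g n := by
  rw [hfun, if_pos hn, eq_prod_primeFactors_of_squarefree hg1 hgmult hn]
  refine prod_le_prod (fun p hp => (hg p hp).1) fun p hp => ?_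
  obtain ⟨hp0, hp1⟩ := hg p hp
  exact le_div_self hp0 (by linarith) (by linarith)

end Real

section SieveRange

variable {Δ : ℝ} {m : ℕ}

theorem pos_and_cast_le_of_mem_Icc_floor (hm : m ∈ Icc 1 ⌊Δ⌋₊) : 0 < m ∧ (m : ℝ) ≤ Δ := by
  obtain ⟨hm1, hmΔ⟩ := mem_Icc.mp hm
  exact ⟨hm1, (Nat.le_floor_iff' (by omega)).mp hmΔ⟩

theorem log_div_nonneg_of_mem_Icc_floor (hm : m ∈ Icc 1 ⌊Δ⌋₊) : 0 ≤ Real.log (Δ / m) := by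
  obtain ⟨hm0, hmΔ⟩ := pos_and_cast_le_of_mem_Icc_floor hm
  exact Real.log_nonneg ((one_le_div (by exact_mod_cast hm0)).mpr hmΔ)

theorem forall_mem_primeFactors_of_mem_Icc_floor {P : ℕ → Prop}
    (hP : ∀ p : ℕ, p.Prime → (p : ℝ) ≤ Δ → P p) (hm : m ∈ Icc 1 ⌊Δ⌋₊) :
    ∀ p ∈ m.primeFactors, P p := by
  obtain ⟨hm0, hmΔ⟩ := pos_and_cast_le_of_mem_Icc_floor hm
  exact fun p hp => hP p (Nat.prime_of_mem_primeFactors hp)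
    (le_trans (by exact_mod_cast Nat.le_of_dvd hm0 (Nat.dvd_of_mem_primeFactors hp)) hmΔ)

theorem mem_Icc_floor_div {ℓ d : ℕ} (hd : d ∈ Icc 1 ⌊Δ⌋₊) (hℓd : ℓ ∣ d) :
    d / ℓ ∈ Icc 1 ⌊Δ⌋₊ := by
  obtain ⟨hd1, hdΔ⟩ := mem_Icc.mp hd
  have hℓ : 0 < ℓ := Nat.pos_of_dvd_of_pos hℓd hd1
  exact mem_Icc.mpr ⟨Nat.div_pos (Nat.le_of_dvd hd1 hℓd) hℓ, (Nat.div_le_self d ℓ).trans hdΔ⟩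

end SieveRange

section SelbergSum

variable {Δ : ℝ} {g : ℕ → ℝ} (hg1 : g 1 = 1)
  (hgmult : ∀ m n : ℕ, m.Coprime n → g (m * n) = g m * g n)
  (hgp : ∀ p : ℕ, p.Prime → (p : ℝ) ≤ Δ → 0 ≤ g p ∧ g p < 1) (ℓ : ℕ)
include hg1 hgmult hgp

theorem bounds_of_mem_Icc_floor {m : ℕ} (hm : m ∈ Icc 1 ⌊Δ⌋₊) (hsf : Squarefree m) :
    0 ≤ g m ∧ g m ≤ hfun g m := by
  have hg := forall_mem_primeFactors_of_mem_Icc_floor hgp hm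
  exact ⟨nonneg_of_squarefree hg1 hgmult hsf fun p hp => (hg p hp).1,
    le_hfun_of_squarefree hg1 hgmult hsf hg⟩

theorem sum_div_mul_log_nonneg :
    0 ≤ ∑ d ∈ (Icc 1 ⌊Δ⌋₊).filter (fun d => Squarefree d ∧ ℓ ∣ d),
      g (d / ℓ) * Real.log (Δ / d) := by
  refine sum_nonneg fun d hd => ?_
  obtain ⟨hd, hsf, hℓd⟩ := mem_filter.mp hd
  exact mul_nonneg (bounds_of_mem_Icc_floor hg1 hgmult hgp (mem_Icc_floor_div hd hℓd)
    (hsf.squarefree_of_dvd (Nat.div_dvd_of_dvd hℓd))).1 (log_div_nonneg_of_mem_Icc_floor hd)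

theorem sum_div_mul_log_le :
    ∑ d ∈ (Icc 1 ⌊Δ⌋₊).filter (fun d => Squarefree d ∧ ℓ ∣ d), g (d / ℓ) * Real.log (Δ / d) ≤
      ∑ m ∈ (Icc 1 ⌊Δ⌋₊).filter Squarefree, hfun g m * Real.log (Δ / m) := by
  refine sum_le_sum_of_injOn (· / ℓ) ?inj ?maps ?le ?nonneg
  case inj =>
    intro a ha b hb hab
    exact (Nat.div_left_inj (mem_filter.mp ha).2.2 (mem_filter.mp hb).2.2).mp hab
  case maps =>
    intro d hd
    obtain ⟨hd, hsf, hℓd⟩ := mem_filter.mp hd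
    exact mem_filter.mpr ⟨mem_Icc_floor_div hd hℓd, hsf.squarefree_of_dvd (Nat.div_dvd_of_dvd hℓd)⟩
  case le =>
    intro d hd
    obtain ⟨hd, hsf, hℓd⟩ := mem_filter.mp hd
    have hm := mem_Icc_floor_div hd hℓd
    obtain ⟨hg0, hgh⟩ := bounds_of_mem_Icc_floor hg1 hgmult hgp hm
      (hsf.squarefree_of_dvd (Nat.div_dvd_of_dvd hℓd))
    have hlog : Real.log (Δ / d) ≤ Real.log (Δ / (d / ℓ : ℕ)) := by
      obtain ⟨hd0, hdΔ⟩ := pos_and_cast_le_of_mem_Icc_floor hd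
      obtain ⟨hm0, -⟩ := pos_and_cast_le_of_mem_Icc_floor hm
      have hd0' : (0 : ℝ) < d := Nat.cast_pos.mpr hd0
      gcongr
      · exact div_pos (hd0'.trans_le hdΔ) hd0'
      · exact (hd0'.trans_le hdΔ).le
      · exact_mod_cast Nat.div_le_self d ℓ
    exact mul_le_mul hgh hlog (log_div_nonneg_of_mem_Icc_floor hd) (hg0.trans hgh)
  case nonneg =>
    intro m hm
    obtain ⟨hm, hsf⟩ := mem_filter.mp hm
    obtain ⟨hg0, hgh⟩ := bounds_of_mem_Icc_floor hg1 hgmult hgp hm hsf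
    exact mul_nonneg (hg0.trans hgh) (log_div_nonneg_of_mem_Icc_floor hm)

end SelbergSum

theorem selberg_weights_bounded_general
    (Δ : ℝ)
    (g : ℕ → ℝ) (hg1 : g 1 = 1)
    (hgmult : ∀ m n : ℕ, Nat.Coprime m n → g (m * n) = g m * g n)
    (hgp : ∀ p : ℕ, p.Prime → (p : ℝ) ≤ Δ → 0 < g p ∧ g p < 1)
    (H : ℝ)
    (hH : H = ∑ d ∈ (Finset.Icc 1 ⌊Δ⌋₊).filter Squarefree,
      hfun g d * Real.log (Δ / d))
    (y : ℕ → ℝ)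
    (hy : ∀ d : ℕ, y d =
      if Squarefree d ∧ (d : ℝ) ≤ Δ then H⁻¹ * Real.log (Δ / d) else 0)
    (ρ : ℕ → ℝ)
    (hρ : ∀ ℓ : ℕ, Squarefree ℓ → (ℓ : ℝ) ≤ Δ →
      ρ ℓ = ((ArithmeticFunction.moebius ℓ : ℤ) : ℝ) / g ℓ *
        ∑ d ∈ (Finset.Icc 1 ⌊Δ⌋₊).filter (fun d => Squarefree d ∧ ℓ ∣ d),
          g d * y d) :
    ∀ ℓ : ℕ, Squarefree ℓ → (ℓ : ℝ) ≤ Δ → |ρ ℓ| ≤ 1 := by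
  intro ℓ hℓ hℓΔ
  have hgp' : ∀ p : ℕ, p.Prime → (p : ℝ) ≤ Δ → 0 ≤ g p ∧ g p < 1 :=
    fun p hp hpΔ => (hgp p hp hpΔ).imp_left le_of_lt
  set T := ∑ d ∈ (Icc 1 ⌊Δ⌋₊).filter (fun d => Squarefree d ∧ ℓ ∣ d),
    g (d / ℓ) * Real.log (Δ / d)
  have hT0 : 0 ≤ T := sum_div_mul_log_nonneg hg1 hgmult hgp' ℓ
  have hTH : T ≤ H := hH ▸ sum_div_mul_log_le hg1 hgmult hgp' ℓ
  have hsum : ∑ d ∈ (Icc 1 ⌊Δ⌋₊).filter (fun d => Squarefree d ∧ ℓ ∣ d), g d * y d =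
      g ℓ * (H⁻¹ * T) := by
    rw [mul_sum, mul_sum]
    refine sum_congr rfl fun d hd => ?_
    obtain ⟨hd, hsf, hℓd⟩ := mem_filter.mp hd
    rw [hy d, if_pos ⟨hsf, (pos_and_cast_le_of_mem_Icc_floor hd).2⟩,
      eq_mul_div_of_squarefree hgmult hsf hℓd]
    ring
  have hμ : |((ArithmeticFunction.moebius ℓ : ℤ) : ℝ)| = 1 := by
    exact_mod_cast ArithmeticFunction.abs_moebius_eq_one_of_squarefree hℓ
  have hℓmem : ℓ ∈ Icc 1 ⌊Δ⌋₊ := mem_Icc.mpr ⟨hℓ.ne_zero.bot_lt, Nat.le_floor hℓΔ⟩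
  have hgℓ : 0 < g ℓ := pos_of_squarefree hg1 hgmult hℓ
    (forall_mem_primeFactors_of_mem_Icc_floor (fun p hp hpΔ => (hgp p hp hpΔ).1) hℓmem)
  calc |ρ ℓ| = H⁻¹ * T := by
        rw [hρ ℓ hℓ hℓΔ, hsum, ← mul_assoc, div_mul_cancel₀ _ hgℓ.ne', abs_mul, hμ, one_mul,
          abs_of_nonneg (mul_nonneg (inv_nonneg.mpr (hT0.trans hTH)) hT0)]
    _ ≤ 1 := inv_mul_le_one_of_le₀ hTH (hT0.trans hTH)

/-- **Boundedness of the Selberg sieve weights.** For every squarefree `ℓ ≤ Δ`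
one has `|ρ_ℓ| ≤ 1`, where `ρ_ℓ = (μ(ℓ)/g(ℓ)) Σ_{d ≤ Δ, ℓ | d, d squarefree} g(d) y_d`,
`y_d = H⁻¹ log(Δ/d)` and `H = Σ_{d ≤ Δ, d squarefree} h(d) log(Δ/d)`. -/
theorem selberg_weights_bounded
    (Δ : ℝ) (hΔ : 2 ≤ Δ)
    (g : ℕ → ℝ) (hg1 : g 1 = 1)
    (hgmult : ∀ m n : ℕ, Nat.Coprime m n → g (m * n) = g m * g n)
    (hgp : ∀ p : ℕ, p.Prime → (p : ℝ) ≤ Δ → 0 < g p ∧ g p < 1)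
    (H : ℝ)
    (hH : H = ∑ d ∈ (Finset.Icc 1 ⌊Δ⌋₊).filter Squarefree,
      hfun g d * Real.log (Δ / d))
    (y : ℕ → ℝ)
    (hy : ∀ d : ℕ, y d =
      if Squarefree d ∧ (d : ℝ) ≤ Δ then H⁻¹ * Real.log (Δ / d) else 0)
    (ρ : ℕ → ℝ)
    (hρ : ∀ ℓ : ℕ, Squarefree ℓ → (ℓ : ℝ) ≤ Δ →
      ρ ℓ = ((ArithmeticFunction.moebius ℓ : ℤ) : ℝ) / g ℓ *
        ∑ d ∈ (Finset.Icc 1 ⌊Δ⌋₊).filter (fun d => Squarefree d ∧ ℓ ∣ d),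
          g d * y d) :
    ∀ ℓ : ℕ, Squarefree ℓ → (ℓ : ℝ) ≤ Δ → |ρ ℓ| ≤ 1 :=
  selberg_weights_bounded_general Δ g hg1 hgmult hgp H hH y hy ρ hρ
end

section
/- Let z > w ≥ 2 and Δ ≥ w³, and assume Assumption 1: G(w) ≤ (3/2)(log w)², and Assumption 2: J(w,Δ)(log Δ)² ≤ 3 K(w²,Δ). Then H² W ≥ ν K(Δ), where ν = 1 − Σ_{w < p ≤ z, p prime} g(p) − (9/2) α² and α = (log w)/(log Δ). -/
open Finset

/-- `K(u) = Σ_{d ≤ u, d squarefree} h(d) (log(Δ/d))²`. -/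
noncomputable def Kfun (g : ℕ → ℝ) (Δ u : ℝ) : ℝ :=
  ∑ d ∈ (Finset.Icc 1 ⌊u⌋₊).filter Squarefree,
    hfun g d * (Real.log (Δ / d)) ^ 2

/-!
For `p ∤ d` one has `H (y_d - y_{pd}) = min(log p, log(Δ/d))`, so
`H² W = K(Δ) - Σ_{p<z} g(p) B(p)` with `B(p) = Σ_{d ≤ Δ, p ∤ d} h(d) min(log p, log(Δ/d))²`.
For `p > w` the minimum is at most `log(Δ/d)`, whence `B(p) ≤ K(Δ)`. For `p ≤ w` it is at most
`log p`; splitting at `d = w` and using `log Δ ≤ (3/2) log(Δ/d)` for `d ≤ w` (as `Δ ≥ w³`) gives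
`B(p) (log Δ)² ≤ (log p)² ((9/4) K(w²) + J(w,Δ) (log Δ)²) ≤ 3 (log p)² K(Δ)` by Assumption 2,
and Assumption 1 turns the sum over `p ≤ w` into the `(9/2) α²` term.
-/

open Real

noncomputable section

def sqfreeUpTo (x : ℝ) : Finset ℕ := (Icc 1 ⌊x⌋₊).filter Squarefree

def Jfun (g : ℕ → ℝ) (w Δ : ℝ) : ℝ :=
  ∑ d ∈ (sqfreeUpTo Δ).filter (fun d : ℕ => w < d), hfun g d

variable {g : ℕ → ℝ}

lemma mem_sqfreeUpTo {x : ℝ} {d : ℕ} (hx : 0 ≤ x) :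
    d ∈ sqfreeUpTo x ↔ Squarefree d ∧ (d : ℝ) ≤ x := by
  simp only [sqfreeUpTo, mem_filter, mem_Icc, Nat.le_floor_iff hx]
  constructor
  · rintro ⟨⟨-, hdx⟩, hd⟩
    exact ⟨hd, hdx⟩
  · rintro ⟨hd, hdx⟩
    exact ⟨⟨Nat.one_le_iff_ne_zero.mpr hd.ne_zero, hdx⟩, hd⟩

lemma log_div_nonneg_of_mem_sqfreeUpTo {x : ℝ} {d : ℕ} (hx : 0 ≤ x)
    (hd : d ∈ sqfreeUpTo x) : 0 ≤ log (x / d) := by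
  obtain ⟨hsf, hdx⟩ := (mem_sqfreeUpTo hx).mp hd
  have hd0 : (0 : ℝ) < d := by exact_mod_cast Nat.pos_of_ne_zero hsf.ne_zero
  exact log_nonneg ((one_le_div hd0).mpr hdx)

lemma hfun_nonneg (hg : ∀ p : ℕ, p.Prime → 0 ≤ g p ∧ g p < 1) (d : ℕ) : 0 ≤ hfun g d := by
  unfold hfun
  split_ifs
  · refine prod_nonneg fun p hp => ?_
    obtain ⟨hg0, hg1⟩ := hg p (Nat.prime_of_mem_primeFactors hp)
    exact div_nonneg hg0 (by linarith)
  · rfl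

lemma Kfun_nonneg (hh : ∀ d, 0 ≤ hfun g d) (Δ u : ℝ) : 0 ≤ Kfun g Δ u :=
  sum_nonneg fun d _ => mul_nonneg (hh d) (sq_nonneg _)

lemma Kfun_mono (hh : ∀ d, 0 ≤ hfun g d) (Δ : ℝ) {u v : ℝ} (huv : u ≤ v) :
    Kfun g Δ u ≤ Kfun g Δ v :=
  sum_le_sum_of_subset_of_nonneg
    (filter_subset_filter _ (Icc_subset_Icc_right (Nat.floor_mono huv)))
    fun d _ _ => mul_nonneg (hh d) (sq_nonneg _)

lemma sum_hfun_mul_log_pos (hh : ∀ d, 0 ≤ hfun g d) {Δ : ℝ} (hΔ : 1 < Δ) :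
    0 < ∑ d ∈ sqfreeUpTo Δ, hfun g d * log (Δ / d) := by
  have h1 : 1 ∈ sqfreeUpTo Δ :=
    (mem_sqfreeUpTo (by linarith)).mpr ⟨squarefree_one, by simpa using hΔ.le⟩
  calc 0 < log Δ := log_pos hΔ
    _ = hfun g 1 * log (Δ / (1 : ℕ)) := by simp [hfun]
    _ ≤ _ := single_le_sum (fun d hd => mul_nonneg (hh d)
        (log_div_nonneg_of_mem_sqfreeUpTo (by linarith) hd)) h1

def logWeight (Δ : ℝ) (d : ℕ) : ℝ :=
  if Squarefree d ∧ (d : ℝ) ≤ Δ then log (Δ / d) else 0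

lemma logWeight_sub_logWeight_mul {Δ : ℝ} {p d : ℕ} (hΔ : 0 < Δ) (hp : p.Prime)
    (hd : Squarefree d) (hdΔ : (d : ℝ) ≤ Δ) (hpd : ¬ p ∣ d) :
    logWeight Δ d - logWeight Δ (p * d) = min (log p) (log (Δ / d)) := by
  have hd0 : (0 : ℝ) < d := by exact_mod_cast Nat.pos_of_ne_zero hd.ne_zero
  have hp0 : (0 : ℝ) < p := by exact_mod_cast hp.pos
  have hpd_sf : Squarefree (p * d) :=
    (Nat.squarefree_mul ((Nat.Prime.coprime_iff_not_dvd hp).mpr hpd)).mpr ⟨hp.squarefree, hd⟩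
  rw [logWeight, if_pos ⟨hd, hdΔ⟩, logWeight]
  push_cast
  by_cases hc : (p : ℝ) * d ≤ Δ
  · rw [if_pos ⟨hpd_sf, hc⟩, min_eq_left (log_le_log hp0 ((le_div_iff₀ hd0).mpr hc)),
      log_div hΔ.ne' hd0.ne', log_div hΔ.ne' (by positivity), log_mul hp0.ne' hd0.ne']
    ring
  · rw [if_neg fun h => hc h.2, sub_zero, min_eq_right]
    exact log_le_log (div_pos hΔ hd0) ((div_le_iff₀ hd0).mpr (not_le.mp hc).le)

def minLogSqSum (g : ℕ → ℝ) (Δ : ℝ) (p : ℕ) : ℝ :=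
  ∑ d ∈ (sqfreeUpTo Δ).filter (¬ p ∣ ·), hfun g d * min (log p) (log (Δ / d)) ^ 2

lemma sq_mul_selbergForm_eq {Δ H : ℝ} {y : ℕ → ℝ} (hΔ : 0 < Δ) (hH : H ≠ 0)
    (hy : ∀ d, y d = H⁻¹ * logWeight Δ d) (P : Finset ℕ) (hP : ∀ p ∈ P, p.Prime) :
    H ^ 2 * ((∑ d ∈ sqfreeUpTo Δ, hfun g d * y d ^ 2) - ∑ p ∈ P, g p *
        ∑ d ∈ (sqfreeUpTo Δ).filter (¬ p ∣ ·), hfun g d * (y d - y (p * d)) ^ 2) =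
      Kfun g Δ Δ - ∑ p ∈ P, g p * minLogSqSum g Δ p := by
  simp only [mul_sub, mul_sum, Kfun, minLogSqSum]
  congr 1
  · refine sum_congr rfl fun d hd => ?_
    rw [hy, logWeight, if_pos ((mem_sqfreeUpTo hΔ.le).mp hd)]
    field_simp
  · refine sum_congr rfl fun p hp => sum_congr rfl fun d hd => ?_
    obtain ⟨hdD, hpd⟩ := mem_filter.mp hd
    obtain ⟨hsf, hdΔ⟩ := (mem_sqfreeUpTo hΔ.le).mp hdD
    rw [hy, hy, ← mul_sub, logWeight_sub_logWeight_mul hΔ (hP p hp) hsf hdΔ hpd]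
    field_simp

lemma minLogSqSum_le_Kfun (hh : ∀ d, 0 ≤ hfun g d)
    {Δ : ℝ} (hΔ : 0 ≤ Δ) (p : ℕ) : minLogSqSum g Δ p ≤ Kfun g Δ Δ := by
  calc minLogSqSum g Δ p
      ≤ ∑ d ∈ (sqfreeUpTo Δ).filter (¬ p ∣ ·), hfun g d * log (Δ / d) ^ 2 := by
        refine sum_le_sum fun d hd => mul_le_mul_of_nonneg_left ?_ (hh d)
        have hlog := log_div_nonneg_of_mem_sqfreeUpTo hΔ (mem_filter.mp hd).1
        exact pow_le_pow_left₀ (le_min (log_natCast_nonneg p) hlog) (min_le_right _ _) 2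
    _ ≤ Kfun g Δ Δ := sum_le_sum_of_subset_of_nonneg (filter_subset _ _)
        fun d _ _ => mul_nonneg (hh d) (sq_nonneg _)

lemma log_sq_le_of_le_of_cube_le {Δ w : ℝ} {d : ℕ} (hd : 1 ≤ d) (hdw : (d : ℝ) ≤ w)
    (hΔ : w ^ 3 ≤ Δ) : log Δ ^ 2 ≤ 9 / 4 * log (Δ / d) ^ 2 := by
  have hd0 : (0 : ℝ) < d := by exact_mod_cast hd
  have hlogd : 0 ≤ log d := log_natCast_nonneg d
  have hdΔ : (d : ℝ) ^ 3 ≤ Δ := (pow_le_pow_left₀ hd0.le hdw 3).trans hΔ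
  have h3 : 3 * log d ≤ log Δ := by
    have := log_le_log (by positivity) hdΔ
    rwa [log_pow, Nat.cast_ofNat] at this
  rw [log_div (by linarith [pow_pos hd0 3]) hd0.ne']
  nlinarith

lemma sum_hfun_mul_log_sq_le (hh : ∀ d, 0 ≤ hfun g d)
    {Δ w : ℝ} (hw : 0 ≤ w) (hΔ : w ^ 3 ≤ Δ) :
    ∑ d ∈ sqfreeUpTo Δ, hfun g d * log Δ ^ 2 ≤
      9 / 4 * Kfun g Δ w + Jfun g w Δ * log Δ ^ 2 := by
  have hΔ0 : 0 ≤ Δ := (pow_nonneg hw 3).trans hΔ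
  have hsmall : ∑ d ∈ (sqfreeUpTo Δ).filter (fun d : ℕ => ¬ w < d), hfun g d * log Δ ^ 2 ≤
      9 / 4 * Kfun g Δ w := by
    rw [Kfun, mul_sum]
    refine (sum_le_sum fun d hd => ?_).trans
      (sum_le_sum_of_subset_of_nonneg (t := sqfreeUpTo w) (fun d hd => ?_) fun d _ _ => ?_)
    · obtain ⟨hdD, hdw⟩ := mem_filter.mp hd
      obtain ⟨hsf, -⟩ := (mem_sqfreeUpTo hΔ0).mp hdD
      have := log_sq_le_of_le_of_cube_le (Nat.one_le_iff_ne_zero.mpr hsf.ne_zero)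
        (not_lt.mp hdw) hΔ
      nlinarith [hh d]
    · obtain ⟨hdD, hdw⟩ := mem_filter.mp hd
      exact (mem_sqfreeUpTo hw).mpr ⟨((mem_sqfreeUpTo hΔ0).mp hdD).1, not_lt.mp hdw⟩
    · exact mul_nonneg (by norm_num) (mul_nonneg (hh d) (sq_nonneg _))
  rw [← sum_filter_add_sum_filter_not (sqfreeUpTo Δ) (fun d : ℕ => w < d), Jfun, sum_mul,
    add_comm]
  exact add_le_add_left hsmall _

lemma minLogSqSum_mul_log_sq_le (hh : ∀ d, 0 ≤ hfun g d)
    {Δ w : ℝ} (hw : 0 ≤ w) (hΔ : w ^ 3 ≤ Δ) (p : ℕ) :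
    minLogSqSum g Δ p * log Δ ^ 2 ≤
      log p ^ 2 * (9 / 4 * Kfun g Δ w + Jfun g w Δ * log Δ ^ 2) := by
  have hΔ0 : 0 ≤ Δ := (pow_nonneg hw 3).trans hΔ
  calc minLogSqSum g Δ p * log Δ ^ 2
      ≤ ∑ d ∈ (sqfreeUpTo Δ).filter (¬ p ∣ ·), log p ^ 2 * (hfun g d * log Δ ^ 2) := by
        rw [minLogSqSum, sum_mul]
        refine sum_le_sum fun d hd => ?_
        have hlog := log_div_nonneg_of_mem_sqfreeUpTo hΔ0 (mem_filter.mp hd).1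
        have hmin : min (log p) (log (Δ / d)) ^ 2 ≤ log p ^ 2 :=
          pow_le_pow_left₀ (le_min (log_natCast_nonneg p) hlog) (min_le_left _ _) 2
        calc hfun g d * min (log p) (log (Δ / d)) ^ 2 * log Δ ^ 2
            ≤ hfun g d * log p ^ 2 * log Δ ^ 2 := by gcongr; exact hh d
          _ = log p ^ 2 * (hfun g d * log Δ ^ 2) := by ring
    _ ≤ log p ^ 2 * ∑ d ∈ sqfreeUpTo Δ, hfun g d * log Δ ^ 2 := by
        rw [mul_sum]
        exact sum_le_sum_of_subset_of_nonneg (filter_subset _ _)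
          fun d _ _ => mul_nonneg (sq_nonneg _) (mul_nonneg (hh d) (sq_nonneg _))
    _ ≤ _ := mul_le_mul_of_nonneg_left (sum_hfun_mul_log_sq_le hh hw hΔ) (sq_nonneg _)

lemma sum_mul_minLogSqSum_le_log_div_sq_mul_Kfun (hh : ∀ d, 0 ≤ hfun g d)
    {Δ w : ℝ} (hw : 1 < w) (hΔ : w ^ 3 ≤ Δ) (P : Finset ℕ) (hP : ∀ p ∈ P, 0 ≤ g p)
    (hG : ∑ p ∈ P, g p * log p ^ 2 ≤ 3 / 2 * log w ^ 2)
    (hJ : Jfun g w Δ * log Δ ^ 2 ≤ 3 * (Kfun g Δ Δ - Kfun g Δ (w ^ 2))) :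
    ∑ p ∈ P, g p * minLogSqSum g Δ p ≤ 9 / 2 * (log w / log Δ) ^ 2 * Kfun g Δ Δ := by
  have hL : 0 < log Δ := log_pos (by nlinarith)
  set C := 9 / 4 * Kfun g Δ w + Jfun g w Δ * log Δ ^ 2 with hCdef
  have hC : C ≤ 3 * Kfun g Δ Δ := by
    have := Kfun_mono hh Δ (show w ≤ w ^ 2 by nlinarith)
    linarith [Kfun_nonneg hh Δ (w ^ 2)]
  have hC0 : 0 ≤ C := add_nonneg (mul_nonneg (by norm_num) (Kfun_nonneg hh Δ w))
    (mul_nonneg (sum_nonneg fun d _ => hh d) (sq_nonneg _))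
  suffices
      (∑ p ∈ P, g p * minLogSqSum g Δ p) * log Δ ^ 2 ≤ 9 / 2 * log w ^ 2 * Kfun g Δ Δ by
    rwa [div_pow, mul_div_assoc', div_mul_eq_mul_div, le_div_iff₀ (by positivity)]
  calc (∑ p ∈ P, g p * minLogSqSum g Δ p) * log Δ ^ 2
      = ∑ p ∈ P, g p * (minLogSqSum g Δ p * log Δ ^ 2) := by
        rw [sum_mul]; simp only [mul_assoc]
    _ ≤ ∑ p ∈ P, g p * (log p ^ 2 * C) := sum_le_sum fun p hp =>
        mul_le_mul_of_nonneg_left (minLogSqSum_mul_log_sq_le hh (by linarith) hΔ p) (hP p hp)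
    _ = (∑ p ∈ P, g p * log p ^ 2) * C := by rw [sum_mul]; simp only [mul_assoc]
    _ ≤ 3 / 2 * log w ^ 2 * (3 * Kfun g Δ Δ) := mul_le_mul hG hC hC0 (by positivity)
    _ = 9 / 2 * log w ^ 2 * Kfun g Δ Δ := by ring

lemma sum_mul_minLogSqSum_le_sum_mul_Kfun (hh : ∀ d, 0 ≤ hfun g d) {Δ : ℝ} (hΔ : 0 ≤ Δ)
    {P Q : Finset ℕ} (hPQ : P ⊆ Q) (hQ : ∀ p ∈ Q, 0 ≤ g p) :
    ∑ p ∈ P, g p * minLogSqSum g Δ p ≤ (∑ p ∈ Q, g p) * Kfun g Δ Δ := by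
  rw [sum_mul]
  calc ∑ p ∈ P, g p * minLogSqSum g Δ p
      ≤ ∑ p ∈ P, g p * Kfun g Δ Δ := sum_le_sum fun p hp =>
        mul_le_mul_of_nonneg_left (minLogSqSum_le_Kfun hh hΔ p) (hQ p (hPQ hp))
    _ ≤ ∑ p ∈ Q, g p * Kfun g Δ Δ := sum_le_sum_of_subset_of_nonneg hPQ fun p hp _ =>
        mul_nonneg (hQ p hp) (Kfun_nonneg hh Δ Δ)

end

theorem HsqW_ge_nu_K_general
    (Δ w z : ℝ) (hw : 2 ≤ w) (hΔ : w ^ 3 ≤ Δ)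
    (g : ℕ → ℝ)
    (hgp : ∀ p : ℕ, p.Prime → 0 ≤ g p ∧ g p < 1)
    (H : ℝ)
    (hH : H = ∑ d ∈ (Finset.Icc 1 ⌊Δ⌋₊).filter Squarefree,
      hfun g d * Real.log (Δ / d))
    (y : ℕ → ℝ)
    (hy : ∀ d : ℕ, y d =
      if Squarefree d ∧ (d : ℝ) ≤ Δ then H⁻¹ * Real.log (Δ / d) else 0)
    (W : ℝ)
    (hW : W = (∑ d ∈ (Finset.Icc 1 ⌊Δ⌋₊).filter Squarefree, hfun g d * y d ^ 2)
      - ∑ p ∈ (Finset.range ⌈z⌉₊).filter (fun p : ℕ => p.Prime ∧ (p : ℝ) < z),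
          g p * ∑ d ∈ (Finset.Icc 1 ⌊Δ⌋₊).filter (fun d => Squarefree d ∧ ¬ p ∣ d),
            hfun g d * (y d - y (p * d)) ^ 2)
    -- Assumption 1: `G(w) ≤ (3/2)(log w)²`
    (hA1 : ∑ p ∈ (Finset.range (⌊w⌋₊ + 1)).filter Nat.Prime,
      g p * (Real.log p) ^ 2 ≤ 3 / 2 * (Real.log w) ^ 2)
    -- Assumption 2: `J(w,Δ)(log Δ)² ≤ 3 K(w²,Δ)`
    (hA2 : (∑ d ∈ (Finset.Icc 1 ⌊Δ⌋₊).filter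
        (fun d : ℕ => Squarefree d ∧ w < (d : ℝ)), hfun g d) * (Real.log Δ) ^ 2
      ≤ 3 * (Kfun g Δ Δ - Kfun g Δ (w ^ 2))) :
    H ^ 2 * W ≥
      (1 - (∑ p ∈ (Finset.range (⌊z⌋₊ + 1)).filter
          (fun p : ℕ => p.Prime ∧ w < (p : ℝ) ∧ (p : ℝ) ≤ z), g p)
        - 9 / 2 * (Real.log w / Real.log Δ) ^ 2) * Kfun g Δ Δ := by
  have hΔ1 : 1 < Δ := by nlinarith
  have hh : ∀ d, 0 ≤ hfun g d := hfun_nonneg hgp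
  have hH0 : 0 < H := hH ▸ sum_hfun_mul_log_pos hh hΔ1
  have hy' : ∀ d, y d = H⁻¹ * logWeight Δ d := fun d => by
    rw [hy, logWeight, mul_ite, mul_zero]
  set P := (range ⌈z⌉₊).filter (fun p : ℕ => p.Prime ∧ (p : ℝ) < z)
  have hP : ∀ p ∈ P, p.Prime := fun p hp => (mem_filter.mp hp).2.1
  have hHW : H ^ 2 * W = Kfun g Δ Δ - ∑ p ∈ P, g p * minLogSqSum g Δ p := by
    rw [hW, ← sq_mul_selbergForm_eq (by linarith) hH0.ne' hy' P hP]
    simp only [sqfreeUpTo, filter_filter]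
  have hG :
      ∑ p ∈ P.filter (fun p : ℕ => (p : ℝ) ≤ w), g p * log p ^ 2 ≤ 3 / 2 * log w ^ 2 := by
    refine le_trans (sum_le_sum_of_subset_of_nonneg (fun p hp => ?_) fun p hp _ => ?_) hA1
    · simp only [P, mem_filter, mem_range] at hp ⊢
      exact ⟨Nat.lt_succ_of_le (Nat.le_floor hp.2), hp.1.2.1⟩
    · exact mul_nonneg (hgp p (mem_filter.mp hp).2).1 (sq_nonneg _)
  have hsmall := sum_mul_minLogSqSum_le_log_div_sq_mul_Kfun hh (by linarith) hΔ _
    (fun p hp => (hgp p (hP p (mem_filter.mp hp).1)).1) hG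
    (by simpa only [Jfun, sqfreeUpTo, filter_filter] using hA2)
  have hsub : P.filter (fun p : ℕ => ¬ (p : ℝ) ≤ w) ⊆ (range (⌊z⌋₊ + 1)).filter
      (fun p : ℕ => p.Prime ∧ w < (p : ℝ) ∧ (p : ℝ) ≤ z) := fun p hp => by
    simp only [P, mem_filter, mem_range, not_le] at hp ⊢
    exact ⟨Nat.lt_succ_of_le (Nat.le_floor hp.1.2.2.le), hp.1.2.1, hp.2, hp.1.2.2.le⟩
  have hlarge := sum_mul_minLogSqSum_le_sum_mul_Kfun hh (zero_lt_one.trans hΔ1).le hsub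
    fun p hp => (hgp p (mem_filter.mp hp).2.1).1
  rw [← sum_filter_add_sum_filter_not P (fun p : ℕ => (p : ℝ) ≤ w)] at hHW
  rw [ge_iff_le, hHW]
  linarith

/-- Under Assumptions 1 and 2, for `z > w ≥ 2` and `Δ ≥ w³` one has
`H² W ≥ ν K(Δ)` where `ν = 1 − Σ_{w<p≤z} g(p) − (9/2) α²`, `α = log w / log Δ`. -/
theorem HsqW_ge_nu_K
    (Δ w z : ℝ) (hw : 2 ≤ w) (hwz : w < z) (hΔ : w ^ 3 ≤ Δ)
    (g : ℕ → ℝ) (hg1 : g 1 = 1)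
    (hgmult : ∀ m n : ℕ, Nat.Coprime m n → g (m * n) = g m * g n)
    (hgp : ∀ p : ℕ, p.Prime → 0 ≤ g p ∧ g p < 1)
    (H : ℝ)
    (hH : H = ∑ d ∈ (Finset.Icc 1 ⌊Δ⌋₊).filter Squarefree,
      hfun g d * Real.log (Δ / d))
    (y : ℕ → ℝ)
    (hy : ∀ d : ℕ, y d =
      if Squarefree d ∧ (d : ℝ) ≤ Δ then H⁻¹ * Real.log (Δ / d) else 0)
    (W : ℝ)
    (hW : W = (∑ d ∈ (Finset.Icc 1 ⌊Δ⌋₊).filter Squarefree, hfun g d * y d ^ 2)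
      - ∑ p ∈ (Finset.range ⌈z⌉₊).filter (fun p : ℕ => p.Prime ∧ (p : ℝ) < z),
          g p * ∑ d ∈ (Finset.Icc 1 ⌊Δ⌋₊).filter (fun d => Squarefree d ∧ ¬ p ∣ d),
            hfun g d * (y d - y (p * d)) ^ 2)
    -- Assumption 1: `G(w) ≤ (3/2)(log w)²`
    (hA1 : ∑ p ∈ (Finset.range (⌊w⌋₊ + 1)).filter Nat.Prime,
      g p * (Real.log p) ^ 2 ≤ 3 / 2 * (Real.log w) ^ 2)
    -- Assumption 2: `J(w,Δ)(log Δ)² ≤ 3 K(w²,Δ)`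
    (hA2 : (∑ d ∈ (Finset.Icc 1 ⌊Δ⌋₊).filter
        (fun d : ℕ => Squarefree d ∧ w < (d : ℝ)), hfun g d) * (Real.log Δ) ^ 2
      ≤ 3 * (Kfun g Δ Δ - Kfun g Δ (w ^ 2))) :
    H ^ 2 * W ≥
      (1 - (∑ p ∈ (Finset.range (⌊z⌋₊ + 1)).filter
          (fun p : ℕ => p.Prime ∧ w < (p : ℝ) ∧ (p : ℝ) ≤ z), g p)
        - 9 / 2 * (Real.log w / Real.log Δ) ^ 2) * Kfun g Δ Δ :=
  HsqW_ge_nu_K_general Δ w z hw hΔ g hgp H hH y hy W hW hA1 hA2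
end

section
/- Let C > 0, w ≥ 2 and x ≥ 2 with w¹² ≤ x, and let (r_d) be reals indexed by squarefree d satisfying |r_d| ≤ C τ₃(d) √(x/d) for all squarefree d ≤ x. Then (log x) Σ_{d < √x w⁶, d squarefree} τ₃(d) |r_d| ≤ C' C w³ x^{3/4} (log x)^{10} for an absolute constant C'. -/
open Finset

/-- The 3-fold divisor function `τ₃(d) = Σ_{e | d} τ(e)`. -/
def tau3 (d : ℕ) : ℕ := ∑ e ∈ d.divisors, e.divisors.card

/-!
For squarefree `d < L := √x w⁶ ≤ x` the hypothesis gives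
`τ₃(d) |r_d| ≤ C τ₃(d)² √(x/d) ≤ C √(x L) τ₃(d)² / d`, and `√(x L) = w³ x^{3/4}`.
On squarefree `d` we have `τ₃(d)² = 9^ω(d) = τ₉(d)`, and since `τ₉ = ζ^{*9}` while the Dirichlet
convolution of nonnegative functions, summed over `[1, N]`, is at most the product of their sums,
`Σ_{d ≤ x} τ₉(d)/d ≤ (Σ_{n ≤ x} 1/n)⁹ ≤ (1 + log x)⁹ ≤ (3 log x)⁹`.
-/

namespace ArithmeticFunction

open scoped ArithmeticFunction.zeta

section Order

variable {R : Type*} [CommSemiring R] [PartialOrder R] [IsOrderedRing R]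

theorem mul_apply_nonneg {f g : ArithmeticFunction R} (hf : ∀ n, 0 ≤ f n) (hg : ∀ n, 0 ≤ g n)
    (n : ℕ) : 0 ≤ (f * g) n := by
  rw [mul_apply]
  exact sum_nonneg fun p _ => mul_nonneg (hf _) (hg _)

theorem pow_apply_nonneg {f : ArithmeticFunction R} (hf : ∀ n, 0 ≤ f n) (k n : ℕ) :
    0 ≤ (f ^ k) n := by
  induction k generalizing n with
  | zero => rw [pow_zero, one_apply]; split_ifs <;> simp
  | succ k ih => rw [pow_succ]; exact mul_apply_nonneg ih hf n

theorem sum_Ioc_mul_le {f g : ArithmeticFunction R} (hf : ∀ n, 0 ≤ f n) (hg : ∀ n, 0 ≤ g n)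
    (N : ℕ) :
    ∑ n ∈ Ioc 0 N, (f * g) n ≤ (∑ n ∈ Ioc 0 N, f n) * ∑ n ∈ Ioc 0 N, g n := by
  rw [sum_Ioc_mul_eq_sum_prod_filter, sum_mul_sum, ← sum_product']
  exact sum_le_sum_of_subset_of_nonneg (filter_subset _ _)
    fun p _ _ => mul_nonneg (hf _) (hg _)

theorem sum_Ioc_pow_le {f : ArithmeticFunction R} (hf : ∀ n, 0 ≤ f n) (k N : ℕ) :
    ∑ n ∈ Ioc 0 N, (f ^ k) n ≤ (∑ n ∈ Ioc 0 N, f n) ^ k := by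
  induction k with
  | zero =>
    simp only [pow_zero, one_apply, sum_ite_eq']
    split_ifs <;> simp
  | succ k ih =>
    rw [pow_succ, pow_succ]
    exact (sum_Ioc_mul_le (pow_apply_nonneg hf k) hf N).trans
      (mul_le_mul_of_nonneg_right ih (sum_nonneg fun n _ => hf n))

end Order

section Field

variable {R : Type*} [Field R]

theorem pdiv_id_mul (f g : ArithmeticFunction R) :
    (f * g).pdiv (ArithmeticFunction.id : ArithmeticFunction ℕ) =
      f.pdiv (ArithmeticFunction.id : ArithmeticFunction ℕ) *
        g.pdiv (ArithmeticFunction.id : ArithmeticFunction ℕ) := by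
  ext n
  simp only [pdiv_apply, mul_apply, natCoe_apply, id_apply, sum_div]
  refine sum_congr rfl fun p hp => ?_
  rw [← (Nat.mem_divisorsAntidiagonal.1 hp).1, Nat.cast_mul, mul_div_mul_comm]

theorem pdiv_id_pow (f : ArithmeticFunction R) (k : ℕ) :
    (f ^ k).pdiv (ArithmeticFunction.id : ArithmeticFunction ℕ) =
      f.pdiv (ArithmeticFunction.id : ArithmeticFunction ℕ) ^ k := by
  induction k with
  | zero =>
    ext n
    rw [pow_zero, pow_zero, pdiv_apply, one_apply]
    split_ifs with h <;> simp [h]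
  | succ k ih => rw [pow_succ, pow_succ, pdiv_id_mul, ih]

end Field

theorem natCoe_pow {R : Type*} [Semiring R] (f : ArithmeticFunction ℕ) (k : ℕ) :
    ((f ^ k : ArithmeticFunction ℕ) : ArithmeticFunction R) = (f : ArithmeticFunction R) ^ k := by
  induction k with
  | zero => simp
  | succ k ih => rw [pow_succ, natCoe_mul, ih, pow_succ]

theorem zeta_pow_apply_prime {p : ℕ} (hp : p.Prime) (k : ℕ) :
    (ζ ^ k : ArithmeticFunction ℕ) p = k := by
  induction k with
  | zero => simp [one_apply_ne hp.ne_one]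
  | succ k ih =>
    rw [pow_succ, mul_zeta_apply, Nat.Prime.sum_divisors hp, ih,
      isMultiplicative_zeta.pow.map_one, add_comm]

theorem zeta_pow_apply_of_squarefree {n : ℕ} (hn : Squarefree n) (k : ℕ) :
    (ζ ^ k : ArithmeticFunction ℕ) n = k ^ n.primeFactors.card := by
  rw [← isMultiplicative_zeta.pow.prod_primeFactors hn, ← prod_const]
  exact prod_congr rfl fun p hp => zeta_pow_apply_prime (Nat.prime_of_mem_primeFactors hp) k

end ArithmeticFunction

open ArithmeticFunction
open scoped ArithmeticFunction.zeta ArithmeticFunction.sigma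

theorem tau3_eq_zeta_pow_apply (d : ℕ) : tau3 d = (ζ ^ 3 : ArithmeticFunction ℕ) d := by
  rw [show (ζ ^ 3 : ArithmeticFunction ℕ) = ζ * σ 0 by
    rw [← zeta_mul_pow_eq_sigma, pow_zero_eq_zeta]; ring, zeta_mul_apply]
  simp only [tau3, sigma_zero_apply]

theorem tau3_sq_of_squarefree {d : ℕ} (hd : Squarefree d) :
    tau3 d ^ 2 = (ζ ^ 9 : ArithmeticFunction ℕ) d := by
  rw [tau3_eq_zeta_pow_apply, zeta_pow_apply_of_squarefree hd, zeta_pow_apply_of_squarefree hd,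
    ← pow_mul, mul_comm, pow_mul]
  norm_num

theorem sqrt_div_le_sqrt_mul_div {x L d : ℝ} (hd : 0 < d) (hdL : d ≤ L) (hx : 0 ≤ x) :
    √(x / d) ≤ √(x * L) / d := by
  calc √(x / d) ≤ √(x * L / d ^ 2) := by
        refine Real.sqrt_le_sqrt ?_
        rw [div_le_div_iff₀ hd (pow_pos hd 2)]
        nlinarith [mul_le_mul_of_nonneg_left hdL hx]
    _ = √(x * L) / d := by rw [Real.sqrt_div' _ (sq_nonneg d), Real.sqrt_sq hd.le]

theorem sqrt_mul_sqrt_mul_pow_six {x w : ℝ} (hx : 0 ≤ x) (hw : 0 ≤ w) :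
    √(x * (√x * w ^ 6)) = w ^ 3 * x ^ ((3 : ℝ) / 4) := by
  rw [Real.sqrt_mul hx, Real.sqrt_mul (Real.sqrt_nonneg x), show w ^ 6 = (w ^ 3) ^ 2 by ring,
    Real.sqrt_sq (pow_nonneg hw 3), Real.sqrt_eq_rpow, Real.sqrt_eq_rpow, ← Real.rpow_mul hx,
    ← mul_assoc, ← Real.rpow_add' hx (by norm_num), mul_comm]
  norm_num

-- `ζ₁ n = 1 / n`, the coefficients of `ζ(s)` at `s = 1` (with the junk value `ζ₁ 0 = 0`).
local notation "ζ₁" => pdiv (ζ : ArithmeticFunction ℝ) (ArithmeticFunction.id : ArithmeticFunction ℕ)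

theorem sum_Ioc_zeta_pdiv_id (N : ℕ) :
    ∑ n ∈ Ioc 0 N, ζ₁ n = harmonic N := by
  rw [harmonic_eq_sum_Icc, Rat.cast_sum, ← Icc_add_one_left_eq_Ioc, zero_add]
  refine sum_congr rfl fun n hn => ?_
  rw [pdiv_apply, natCoe_apply, natCoe_apply, zeta_apply_ne (by grind), id_apply, Nat.cast_one,
    one_div, Rat.cast_inv, Rat.cast_natCast]

theorem sq_tau3_div_of_squarefree {d : ℕ} (hd : Squarefree d) :
    (tau3 d : ℝ) ^ 2 / d = (ζ₁ ^ 9) d := by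
  rw [← pdiv_id_pow, ← natCoe_pow, pdiv_apply, natCoe_apply, natCoe_apply, id_apply,
    ← tau3_sq_of_squarefree hd, Nat.cast_pow]

theorem sum_tau3_mul_abs_le {C x L : ℝ} {r : ℕ → ℝ} {s : Finset ℕ} (hC : 0 ≤ C) (hLx : L ≤ x)
    (hs : ∀ d ∈ s, Squarefree d ∧ (d : ℝ) < L)
    (hr : ∀ d : ℕ, Squarefree d → (d : ℝ) ≤ x → |r d| ≤ C * tau3 d * √(x / d)) :
    ∑ d ∈ s, (tau3 d : ℝ) * |r d| ≤ C * √(x * L) * ∑ d ∈ s, (ζ₁ ^ 9) d := by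
  rw [mul_sum]
  refine sum_le_sum fun d hd => ?_
  obtain ⟨hsq, hdL⟩ := hs d hd
  have hd0 : (0 : ℝ) < d := Nat.cast_pos.2 (Nat.pos_of_ne_zero hsq.ne_zero)
  have hdx : (d : ℝ) ≤ x := (hdL.trans_le hLx).le
  calc (tau3 d : ℝ) * |r d| ≤ tau3 d * (C * tau3 d * √(x / d)) := by gcongr; exact hr d hsq hdx
    _ ≤ tau3 d * (C * tau3 d * (√(x * L) / d)) := by
        gcongr; exact sqrt_div_le_sqrt_mul_div hd0 hdL.le (hd0.le.trans hdx)
    _ = C * √(x * L) * ((tau3 d : ℝ) ^ 2 / d) := by ring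
    _ = C * √(x * L) * (ζ₁ ^ 9) d := by rw [sq_tau3_div_of_squarefree hsq]

theorem sum_zeta_pdiv_id_pow_le_harmonic_pow {s : Finset ℕ} {N : ℕ} (hs : s ⊆ Ioc 0 N) (k : ℕ) :
    ∑ d ∈ s, (ζ₁ ^ k) d ≤ (harmonic N : ℝ) ^ k := by
  have hnonneg : ∀ n, 0 ≤ ζ₁ n := fun n => by
    rw [pdiv_apply, natCoe_apply, natCoe_apply]; positivity
  calc ∑ d ∈ s, (ζ₁ ^ k) d ≤ ∑ d ∈ Ioc 0 N, (ζ₁ ^ k) d :=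
        sum_le_sum_of_subset_of_nonneg hs fun n _ _ => pow_apply_nonneg hnonneg k n
    _ ≤ (∑ d ∈ Ioc 0 N, ζ₁ d) ^ k := sum_Ioc_pow_le hnonneg k N
    _ = (harmonic N : ℝ) ^ k := by rw [sum_Ioc_zeta_pdiv_id]

/-- **Bound for the sieve remainder.** There is an absolute constant `C'` such that
if `C > 0`, `w ≥ 2`, `x ≥ 2` with `w¹² ≤ x`, and `|r_d| ≤ C τ₃(d) √(x/d)` for all
squarefree `d ≤ x`, then
`(log x) Σ_{d < √x w⁶, d squarefree} τ₃(d) |r_d| ≤ C' C w³ x^{3/4} (log x)^{10}`. -/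
theorem remainder_bound :
    ∃ C' : ℝ, 0 < C' ∧
      ∀ (C w x : ℝ) (r : ℕ → ℝ), 0 < C → 2 ≤ w → 2 ≤ x → w ^ 12 ≤ x →
        (∀ d : ℕ, Squarefree d → (d : ℝ) ≤ x →
          |r d| ≤ C * tau3 d * Real.sqrt (x / d)) →
        Real.log x *
            ∑ d ∈ (Finset.range ⌈Real.sqrt x * w ^ 6⌉₊).filter
              (fun d : ℕ => Squarefree d ∧ (d : ℝ) < Real.sqrt x * w ^ 6),
                (tau3 d : ℝ) * |r d|
          ≤ C' * C * w ^ 3 * x ^ ((3 : ℝ) / 4) * Real.log x ^ 10 := by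
  refine ⟨3 ^ 9, by norm_num, fun C w x r hC hw hx hwx hr => ?_⟩
  set L := √x * w ^ 6
  have hLx : L ≤ x := by
    have : w ^ 6 ≤ √x := Real.le_sqrt_of_sq_le (by rw [← pow_mul]; exact hwx)
    calc L ≤ √x * √x := mul_le_mul_of_nonneg_left this (Real.sqrt_nonneg x)
      _ = x := Real.mul_self_sqrt (by linarith)
  set s := (range ⌈L⌉₊).filter (fun d : ℕ => Squarefree d ∧ (d : ℝ) < L)
  have hs : s ⊆ Ioc 0 ⌊x⌋₊ := fun d hd => by
    obtain ⟨-, hsq, hdL⟩ := mem_filter.1 hd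
    exact mem_Ioc.2 ⟨Nat.pos_of_ne_zero hsq.ne_zero, Nat.le_floor (hdL.trans_le hLx).le⟩
  have hN : 0 < ⌊x⌋₊ := Nat.floor_pos.2 (by linarith)
  have hlog : 1 + Real.log ⌊x⌋₊ ≤ 3 * Real.log x := by
    have h2 : 1 ≤ 2 * Real.log x := by
      linarith [Real.log_le_log two_pos hx, Real.log_two_gt_d9]
    have hfloor : Real.log ⌊x⌋₊ ≤ Real.log x :=
      Real.log_le_log (Nat.cast_pos.2 hN) (Nat.floor_le (by linarith))
    linarith
  have hlogx : 0 ≤ Real.log x := Real.log_nonneg (by linarith)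
  calc Real.log x * ∑ d ∈ s, (tau3 d : ℝ) * |r d|
      ≤ Real.log x * (C * √(x * L) * ∑ d ∈ s, (ζ₁ ^ 9) d) := by
        gcongr
        exact sum_tau3_mul_abs_le hC.le hLx (fun d hd => (mem_filter.1 hd).2) hr
    _ ≤ Real.log x * (C * √(x * L) * (3 * Real.log x) ^ 9) := by
        gcongr
        exact (sum_zeta_pdiv_id_pow_le_harmonic_pow hs 9).trans <|
          pow_le_pow_left₀ (Rat.cast_nonneg.2 (harmonic_pos hN.ne').le)
            ((harmonic_le_one_add_log _).trans hlog) 9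
    _ = 3 ^ 9 * C * w ^ 3 * x ^ ((3 : ℝ) / 4) * Real.log x ^ 10 := by
        rw [sqrt_mul_sqrt_mul_pow_six (by linarith) (by linarith)]
        ring
end
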